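/- arXiv:2105.01784 — 5 statements merged into one kernel-verified Lean document; each statement's English description precedes it below -/
import Mathlib

section
/- For all even integers q ≥ 4 and real d ≥ 3q, setting t = 1 - 2/q and h₀ = e^{d/(2q)}, we have h₀ > 3 and d·log((h₀ + t)/(t·h₀ + 1)) > d/(2q); consequently the function f(x) = ((x+t)/(tx+1))^d satisfies f(h₀) > h₀. -/
open Real

theorem stmt_0 (q : ℕ) (hq4 : 4 ≤ q) (hqe : Even q) (d : ℝ) (hd : 3 * (q : ℝ) ≤ d)
    (t h₀ : ℝ) (ht : t = 1 - 2 / q) (hh : h₀ = Real.exp (d / (2 * q))) :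
    3 < h₀ ∧ d / (2 * q) < d * Real.log ((h₀ + t) / (t * h₀ + 1)) ∧
      h₀ < ((h₀ + t) / (t * h₀ + 1)) ^ d := by
  have hqR : (4:ℝ) ≤ q := by exact_mod_cast hq4
  have hqpos : (0:ℝ) < q := by linarith
  set s : ℝ := 2 / q with hs_def
  have hs0 : 0 < s := by positivity
  have hs : s ≤ 1/2 := by
    rw [hs_def, div_le_div_iff₀ hqpos (by norm_num)]; linarith
  have ht' : t = 1 - s := ht
  have hdpos : 0 < d := by linarith
  have h32 : (3:ℝ)/2 ≤ d / (2*q) := by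
    rw [le_div_iff₀ (by positivity)]; linarith
  have hexp32 : (3:ℝ) < Real.exp (3/2) := by
    have e1 := Real.exp_one_gt_d9
    have e2 := Real.add_one_le_exp (1/2 : ℝ)
    have e3 : Real.exp (3/2 : ℝ) = Real.exp 1 * Real.exp (1/2) := by
      rw [← Real.exp_add]; norm_num
    nlinarith [Real.exp_pos (1/2:ℝ), Real.exp_pos (1:ℝ)]
  have h3 : 3 < h₀ := by
    rw [hh]; exact lt_of_lt_of_le hexp32 (Real.exp_le_exp.mpr h32)
  have hN : 0 < h₀ + t := by rw [ht']; nlinarith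
  have hD : 0 < t * h₀ + 1 := by rw [ht']; nlinarith
  have hND : t * h₀ + 1 < h₀ + t := by
    rw [ht']; nlinarith [mul_pos hs0 (show (0:ℝ) < h₀ - 1 by linarith)]
  have hyne : (t * h₀ + 1) / (h₀ + t) ≠ 1 := by
    exact ne_of_lt ((div_lt_one hN).mpr hND)
  have hy := Real.log_lt_sub_one_of_pos (div_pos hD hN) hyne
  have hloginv : Real.log ((h₀ + t) / (t * h₀ + 1)) =
      - Real.log ((t * h₀ + 1) / (h₀ + t)) := by
    rw [← Real.log_inv, inv_div]
  have hkey : 1 / (2*(q:ℝ)) < 1 - (t * h₀ + 1) / (h₀ + t) := by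
    have h14 : 1 / (2*(q:ℝ)) = s / 4 := by
      rw [hs_def]; field_simp; ring
    rw [h14, lt_sub_iff_add_lt, ← lt_sub_iff_add_lt', div_lt_iff₀ hN]
    rw [ht']
    nlinarith [mul_pos hs0 (show (0:ℝ) < 3*h₀ - 5 + s by nlinarith)]
  have hlog : 1 / (2*(q:ℝ)) < Real.log ((h₀ + t) / (t * h₀ + 1)) := by
    rw [hloginv]; linarith
  have part2 : d / (2 * q) < d * Real.log ((h₀ + t) / (t * h₀ + 1)) := by
    have := mul_lt_mul_of_pos_left hlog hdpos
    calc d / (2 * (q:ℝ)) = d * (1 / (2*q)) := by ring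
      _ < _ := this
  refine ⟨h3, part2, ?_⟩
  have hRpos : 0 < (h₀ + t) / (t * h₀ + 1) := div_pos hN hD
  calc h₀ = Real.exp (d / (2*q)) := hh
    _ < Real.exp (d * Real.log ((h₀ + t) / (t * h₀ + 1))) := Real.exp_lt_exp.mpr part2
    _ = ((h₀ + t) / (t * h₀ + 1)) ^ d := by
        rw [← Real.log_rpow hRpos, Real.exp_log (Real.rpow_pos_of_pos hRpos d)]
end

section
/- For all even integers q ≥ 4 and real d > 0, setting t = 1 - 2/q and h₁ = e^{4d/q}, the function f(x) = ((x+t)/(tx+1))^d satisfies f(h₁) < h₁, provided q ≥ 4 (so t ≥ 1/2). -/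
/-!
Write `r = (h + t) / (t h + 1)`. Then `r - 1 = (1 - t)(h - 1) / (t h + 1) ≤ (1 - t) / t`, and for
`t = 1 - 2/q` with `q ≥ 4` this is `2 / (q - 2) ≤ 4 / q`. Since `log r < r - 1` for `r ≠ 1`,
`r ^ d = exp (d log r) < exp (4 d / q) = h₁`.
-/

open Real

lemma div_mul_add_one_sub_one_le {t h : ℝ} (ht0 : 0 < t) (ht1 : t ≤ 1) (hh : 0 ≤ h) :
    (h + t) / (t * h + 1) - 1 ≤ (1 - t) / t := by
  have hden : 0 < t * h + 1 := by positivity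
  rw [div_sub_one hden.ne', div_le_div_iff₀ hden ht0]
  nlinarith [mul_nonneg (sub_nonneg.2 ht1) (mul_nonneg ht0.le hh)]

lemma log_div_mul_add_one_lt {t h : ℝ} (ht0 : 0 < t) (ht1 : t < 1) (hh : 1 < h) :
    log ((h + t) / (t * h + 1)) < (1 - t) / t := by
  have hden : 0 < t * h + 1 := by positivity
  have hr : 1 < (h + t) / (t * h + 1) := by
    rw [one_lt_div hden]
    nlinarith [mul_pos (sub_pos.2 ht1) (sub_pos.2 hh)]
  calc log ((h + t) / (t * h + 1)) < (h + t) / (t * h + 1) - 1 :=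
        log_lt_sub_one_of_pos (by linarith) hr.ne'
    _ ≤ (1 - t) / t := div_mul_add_one_sub_one_le ht0 ht1.le (by linarith)

lemma one_sub_div_le_of_eq_one_sub_two_div {q t : ℝ} (hq : 4 ≤ q) (ht : t = 1 - 2 / q) :
    (1 - t) / t ≤ 4 / q := by
  have hq0 : 0 < q := by linarith
  have ht0 : 0 < t := by
    rw [ht, sub_pos, div_lt_one hq0]
    linarith
  rw [div_le_div_iff₀ ht0 hq0, ht]
  field_simp
  linarith

theorem stmt_1_general (q : ℕ) (hq4 : 4 ≤ q) (d : ℝ) (hd : 0 < d)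
    (t h₁ : ℝ) (ht : t = 1 - 2 / q) (hh : h₁ = Real.exp (4 * d / q)) :
    ((h₁ + t) / (t * h₁ + 1)) ^ d < h₁ := by
  have hq : (4 : ℝ) ≤ q := by exact_mod_cast hq4
  have hq0 : (0 : ℝ) < q := by linarith
  have ht0 : 0 < t := by
    rw [ht, sub_pos, div_lt_one hq0]
    linarith
  have ht1 : t < 1 := by
    rw [ht]
    linarith [div_pos two_pos hq0]
  have hh1 : 1 < h₁ := by
    rw [hh, one_lt_exp_iff]
    positivity
  have hlog : log ((h₁ + t) / (t * h₁ + 1)) < 4 / q :=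
    (log_div_mul_add_one_lt ht0 ht1 hh1).trans_le (one_sub_div_le_of_eq_one_sub_two_div hq ht)
  calc ((h₁ + t) / (t * h₁ + 1)) ^ d = exp (log ((h₁ + t) / (t * h₁ + 1)) * d) :=
        rpow_def_of_pos (by positivity) d
    _ < exp (4 / q * d) := exp_lt_exp.2 (mul_lt_mul_of_pos_right hlog hd)
    _ = h₁ := by rw [hh, div_mul_eq_mul_div, mul_comm 4 d]

theorem stmt_1 (q : ℕ) (hq4 : 4 ≤ q) (hqe : Even q) (d : ℝ) (hd : 0 < d)
    (t h₁ : ℝ) (ht : t = 1 - 2 / q) (hh : h₁ = Real.exp (4 * d / q)) :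
    ((h₁ + t) / (t * h₁ + 1)) ^ d < h₁ :=
  stmt_1_general q hq4 d hd t h₁ ht hh
end

section
/- Let Δ ≥ 50 and λ ≥ 50/Δ. Suppose x, y > 0 satisfy x = λ/(1+y)^{Δ-1}, y = λ/(1+x)^{Δ-1}, and x < y. Then x ≤ 1/(30λΔ²). -/
/-!
Write `n = Δ - 1`, so that `x (1 + y)^n = y (1 + x)^n = λ`. The function `(1 + t)^n / t^p` is
increasing for `t ≥ p / (n - p)`; with `p = 1` it takes the same value at `x < y`, which forces
`x < 1 / (n - 1)`. Hence `(1 + x)^n ≤ e^{n/(n-1)} ≤ 3` and `y = λ / (1 + x)^n ≥ λ / 3`, so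
`x = λ / (1 + y)^n ≤ λ / (1 + λ/3)^n`. Monotonicity with `p = 2` reduces the remaining bound
`(1 + λ/3)^n ≥ 30 λ² Δ²` to the smallest admissible `λ = 50/Δ`, where it reads
`(1 + 50/(3Δ))^n ≥ 75000` and follows from `n log(1 + t) ≥ n t / (1 + t) ≥ 12`.
-/

open Real Set

theorem strictMonoOn_mul_log_one_add_sub_mul_log {a b : ℝ} (hb : 0 < b) (hba : b < a) :
    StrictMonoOn (fun t => a * log (1 + t) - b * log t) (Ici (b / (a - b))) := by
  have hc : 0 < b / (a - b) := div_pos hb (sub_pos.2 hba)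
  have hderiv : ∀ t, 0 < t →
      HasDerivAt (fun t => a * log (1 + t) - b * log t) (a / (1 + t) - b / t) t := by
    intro t ht
    have hlog1 := ((hasDerivAt_id' t).const_add 1).log (by simp; linarith)
    have hlog := (hasDerivAt_id' t).log ht.ne'
    exact ((hlog1.const_mul a).fun_sub (hlog.const_mul b)).congr_deriv (by ring)
  apply strictMonoOn_of_deriv_pos (convex_Ici _)
  · exact fun t ht => (hderiv t (hc.trans_le ht)).continuousAt.continuousWithinAt
  · intro t ht
    rw [interior_Ici, mem_Ioi] at ht
    have ht0 : 0 < t := hc.trans ht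
    rw [(hderiv t ht0).deriv, sub_pos, div_lt_div_iff₀ ht0 (by linarith)]
    rw [div_lt_iff₀ (sub_pos.2 hba)] at ht
    linarith

theorem strictMonoOn_one_add_pow_div_pow {n p : ℕ} (hp : 0 < p) (hpn : p < n) :
    StrictMonoOn (fun t : ℝ => (1 + t) ^ n / t ^ p) (Ici ((p : ℝ) / (n - p))) := by
  have hthr : 0 < (p : ℝ) / (n - p) :=
    div_pos (by exact_mod_cast hp) (sub_pos.2 (by exact_mod_cast hpn))
  intro s hs t ht hst
  have hs0 : 0 < s := hthr.trans_le hs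
  have ht0 : 0 < t := hs0.trans hst
  rw [← log_lt_log_iff (by positivity) (by positivity), log_div (by positivity) (by positivity),
    log_div (by positivity) (by positivity), log_pow, log_pow, log_pow, log_pow]
  exact strictMonoOn_mul_log_one_add_sub_mul_log (by exact_mod_cast hp)
    (by exact_mod_cast hpn) hs ht hst

theorem lt_one_div_sub_one_of_mul_one_add_pow_eq {n : ℕ} (hn : 2 ≤ n) {x y : ℝ} (hx : 0 < x)
    (hxy : x < y) (h : x * (1 + y) ^ n = y * (1 + x) ^ n) : x < 1 / (n - 1) := by
  by_contra! hx1
  have hmono := strictMonoOn_one_add_pow_div_pow (p := 1) one_pos hn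
  simp only [Nat.cast_one] at hmono
  have hlt := hmono hx1 (hx1.trans hxy.le) hxy
  have heq : (1 + x) ^ n / x ^ 1 = (1 + y) ^ n / y ^ 1 := by
    rw [pow_one, pow_one, div_eq_div_iff hx.ne' (hx.trans hxy).ne']
    linarith
  exact hlt.ne heq

theorem one_add_pow_le_exp_mul (n : ℕ) {t : ℝ} (ht : 0 ≤ 1 + t) :
    (1 + t) ^ n ≤ exp (n * t) := by
  rw [exp_nat_mul]
  gcongr
  linarith [add_one_le_exp t]

theorem exp_mul_div_one_add_le_one_add_pow (n : ℕ) {t : ℝ} (ht : -1 < t) :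
    exp (n * (t / (1 + t))) ≤ (1 + t) ^ n := by
  have ht' : 0 < 1 + t := by linarith
  rw [← exp_log (pow_pos ht' n), exp_le_exp, log_pow]
  gcongr
  calc t / (1 + t) = 1 - (1 + t)⁻¹ := by field_simp; ring
    _ ≤ log (1 + t) := one_sub_inv_le_log_of_pos ht'

theorem one_add_pow_le_three {n : ℕ} (hn : 49 ≤ n) {t : ℝ} (ht : 0 ≤ t)
    (htn : t ≤ 1 / (n - 1)) : (1 + t) ^ n ≤ 3 := by
  have hn' : (49 : ℝ) ≤ n := by exact_mod_cast hn
  calc (1 + t) ^ n ≤ exp (n * t) := one_add_pow_le_exp_mul n (by linarith)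
    _ ≤ exp (log 3) := by
        rw [exp_le_exp]
        calc (n : ℝ) * t ≤ n * (1 / (n - 1)) := by gcongr
          _ ≤ 49 / 48 := by
            rw [mul_one_div, div_le_div_iff₀ (by linarith) (by norm_num)]
            linarith
          _ ≤ log 3 := by linarith [log_three_gt_d9]
    _ = 3 := exp_log (by norm_num)

theorem seventyFiveThousand_le_one_add_pow {n : ℕ} (hn : 49 ≤ n) :
    (75000 : ℝ) ≤ (1 + 50 / (3 * (n + 1))) ^ n := by
  have hn' : (49 : ℝ) ≤ n := by exact_mod_cast hn
  have hu : (0 : ℝ) ≤ 50 / (3 * (n + 1)) := by positivity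
  have hratio : (50 : ℝ) / (3 * (n + 1)) / (1 + 50 / (3 * (n + 1))) = 50 / (3 * n + 53) := by
    field_simp
    ring
  calc (75000 : ℝ) ≤ 2.7182818283 ^ 12 := by norm_num
    _ ≤ exp 1 ^ 12 := by gcongr; exact exp_one_gt_d9.le
    _ = exp 12 := by rw [← exp_nat_mul]; norm_num
    _ ≤ exp (n * (50 / (3 * (n + 1)) / (1 + 50 / (3 * (n + 1))))) := by
        rw [exp_le_exp, hratio, mul_div_assoc', le_div_iff₀ (by linarith)]
        linarith
    _ ≤ (1 + 50 / (3 * (n + 1))) ^ n := exp_mul_div_one_add_le_one_add_pow n (by linarith)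

theorem mul_sq_le_one_add_pow {n : ℕ} (hn : 49 ≤ n) {u : ℝ} (hu : 50 ≤ 3 * (n + 1) * u) :
    270 * ((n + 1) * u) ^ 2 ≤ (1 + u) ^ n := by
  have hn' : (49 : ℝ) ≤ n := by exact_mod_cast hn
  set u₀ : ℝ := 50 / (3 * (n + 1)) with hu₀
  have hu₀u : u₀ ≤ u := by rw [hu₀, div_le_iff₀ (by positivity)]; linarith
  have hu₀pos : 0 < u₀ := by positivity
  have hthr : ((2 : ℕ) : ℝ) / (n - (2 : ℕ)) ≤ u₀ := by
    rw [hu₀, div_le_div_iff₀ (by push_cast; linarith) (by positivity)]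
    push_cast
    linarith
  have hmono : (1 + u₀) ^ n / u₀ ^ 2 ≤ (1 + u) ^ n / u ^ 2 :=
    (strictMonoOn_one_add_pow_div_pow two_pos (by omega)).monotoneOn hthr (hthr.trans hu₀u) hu₀u
  have hbase : 270 * (n + 1) ^ 2 ≤ (1 + u₀) ^ n / u₀ ^ 2 := by
    rw [le_div_iff₀ (by positivity)]
    calc 270 * ((n : ℝ) + 1) ^ 2 * u₀ ^ 2 = 75000 := by rw [hu₀]; field_simp; norm_num
      _ ≤ (1 + u₀) ^ n := seventyFiveThousand_le_one_add_pow hn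
  have hupos : 0 < u := hu₀pos.trans_le hu₀u
  calc 270 * ((n + 1) * u) ^ 2 = 270 * (n + 1) ^ 2 * u ^ 2 := by ring
    _ ≤ (1 + u) ^ n / u ^ 2 * u ^ 2 := by gcongr; exact hbase.trans hmono
    _ = (1 + u) ^ n := div_mul_cancel₀ _ (by positivity)

theorem stmt_10_general (Δ : ℕ) (hΔ : 50 ≤ Δ) (lam : ℝ) (hlam : 50 / Δ ≤ lam)
    (x y : ℝ) (hx : 0 < x)
    (hxeq : x = lam / (1 + y) ^ (Δ - 1)) (hyeq : y = lam / (1 + x) ^ (Δ - 1))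
    (hxy : x < y) :
    x ≤ 1 / (30 * lam * Δ ^ 2) := by
  obtain ⟨n, rfl⟩ : ∃ n, Δ = n + 1 := ⟨Δ - 1, by omega⟩
  simp only [Nat.add_sub_cancel, Nat.cast_add, Nat.cast_one] at hxeq hyeq hlam ⊢
  have hn : 49 ≤ n := by omega
  have hy : 0 < y := hx.trans hxy
  have hlam0 : 0 < lam := lt_of_lt_of_le (by positivity) hlam
  have hxy_eq : x * (1 + y) ^ n = y * (1 + x) ^ n :=
    calc x * (1 + y) ^ n = lam := by rw [hxeq]; field_simp
      _ = y * (1 + x) ^ n := by rw [hyeq]; field_simp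
  have hx_small := lt_one_div_sub_one_of_mul_one_add_pow_eq (by omega) hx hxy hxy_eq
  have hy_large : lam / 3 ≤ y := by
    rw [hyeq]
    gcongr
    exact one_add_pow_le_three hn hx.le hx_small.le
  have hpow := mul_sq_le_one_add_pow hn (u := lam / 3) (by
    rw [div_le_iff₀ (by positivity)] at hlam
    linarith)
  calc x = lam / (1 + y) ^ n := hxeq
    _ ≤ lam / (1 + lam / 3) ^ n := by gcongr
    _ ≤ lam / (270 * ((n + 1) * (lam / 3)) ^ 2) := by gcongr
    _ = 1 / (30 * lam * (n + 1) ^ 2) := by field_simp; ring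

theorem stmt_10 (Δ : ℕ) (hΔ : 50 ≤ Δ) (lam : ℝ) (hlam : 50 / Δ ≤ lam)
    (x y : ℝ) (hx : 0 < x) (hy : 0 < y)
    (hxeq : x = lam / (1 + y) ^ (Δ - 1)) (hyeq : y = lam / (1 + x) ^ (Δ - 1))
    (hxy : x < y) :
    x ≤ 1 / (30 * lam * Δ ^ 2) :=
  stmt_10_general Δ hΔ lam hlam x y hx hxeq hyeq hxy
end

section
/- Every collection Γ of vertex sets in a 2n-vertex graph consisting of pairwise disjoint sets each of size at most n/(3Δ), where every subcollection U of aggregate size in (n/(6Δ), n/(3Δ)] satisfies |U⁺| ≥ (Δ-1)/2·|U| (U⁺ being U together with its neighborhood), has total size at most 12n/Δ, provided Δ ≥ 3 and the sets in distinct extracted subcollections have disjoint closed neighborhoods. -/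
/-!
Let `a = n/(6Δ)`. Since every polymer has size at most `2a`, a family of total size `> a` contains
a subfamily `S` of total size in `(a, 2a]`, to which the expansion hypothesis applies:
`(Δ-1)/2 · |V_S| ≤ |S⁺|`. The closed neighborhoods of distinct polymers are disjoint, so
`|Γ⁺| = |(Γ \ S)⁺| + |S⁺|`, and peeling off such subfamilies one after another gives
`(Δ-1)/2 · |V_Γ| ≤ (Δ-1)/2 · a + |Γ⁺| ≤ (Δ-1)/2 · a + 2n`, i.e. `|V_Γ| ≤ n/(6Δ) + 4n/(Δ-1)`,
which is at most `12n/Δ` once `Δ ≥ 3`.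
-/

open Finset

/-- The closed neighborhood `U⁺ = U ∪ ∂U` of a vertex set `U` in a graph `G`. -/
def closedNbhd {V : Type*} [Fintype V] [DecidableEq V] (G : SimpleGraph V)
    [DecidableRel G.Adj] (U : Finset V) : Finset V :=
  U ∪ Finset.univ.filter (fun v => ∃ u ∈ U, G.Adj u v)

theorem Finset.card_biUnion_le_card_biUnion_sdiff_add {ι α : Type*} [DecidableEq ι]
    [DecidableEq α] (Γ S : Finset ι) (f : ι → Finset α) :
    (Γ.biUnion f).card ≤ ((Γ \ S).biUnion f).card + (S.biUnion f).card := by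
  calc (Γ.biUnion f).card ≤ ((Γ \ S ∪ S).biUnion f).card :=
        card_le_card (biUnion_subset_biUnion_of_subset_left f le_sdiff_sup)
    _ ≤ ((Γ \ S).biUnion f).card + (S.biUnion f).card := by
        rw [union_biUnion]
        exact card_union_le _ _

theorem Finset.exists_subset_card_biUnion_mem_Ioc {α : Type*} [DecidableEq α] {a : ℝ}
    (ha : 0 ≤ a) (Γ : Finset (Finset α)) (hsize : ∀ γ ∈ Γ, (γ.card : ℝ) ≤ 2 * a)
    (hbig : a < (Γ.biUnion id).card) :
    ∃ S ⊆ Γ, ((S.biUnion id).card : ℝ) ∈ Set.Ioc a (2 * a) := by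
  induction Γ using Finset.induction_on with
  | empty =>
    rw [biUnion_empty, card_empty, Nat.cast_zero] at hbig
    linarith
  | insert γ Γ _ ih =>
    by_cases hΓ : a < (Γ.biUnion id).card
    · obtain ⟨S, hSΓ, hS⟩ := ih (fun δ hδ => hsize δ (mem_insert_of_mem hδ)) hΓ
      exact ⟨S, hSΓ.trans (subset_insert γ Γ), hS⟩
    by_cases hγ : a < γ.card
    · refine ⟨{γ}, singleton_subset_iff.mpr (mem_insert_self γ Γ), ?_⟩
      rw [singleton_biUnion]
      exact ⟨hγ, hsize γ (mem_insert_self γ Γ)⟩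
    refine ⟨insert γ Γ, subset_refl _, hbig, ?_⟩
    have hcard : ((insert γ Γ).biUnion id).card ≤ γ.card + (Γ.biUnion id).card := by
      rw [biUnion_insert]
      exact card_union_le _ _
    have : (((insert γ Γ).biUnion id).card : ℝ) ≤ γ.card + (Γ.biUnion id).card := by
      exact_mod_cast hcard
    linarith

section ClosedNbhd

variable {V : Type*} [Fintype V] [DecidableEq V] (G : SimpleGraph V) [DecidableRel G.Adj]

theorem closedNbhd_biUnion (Γ : Finset (Finset V)) :
    closedNbhd G (Γ.biUnion id) = Γ.biUnion (closedNbhd G) := by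
  ext v
  simp only [closedNbhd, mem_union, mem_filter, mem_biUnion, mem_univ, true_and, id]
  aesop

theorem card_closedNbhd_biUnion {Γ : Finset (Finset V)}
    (hΓ : (Γ : Set (Finset V)).PairwiseDisjoint (closedNbhd G)) :
    (closedNbhd G (Γ.biUnion id)).card = ∑ γ ∈ Γ, (closedNbhd G γ).card := by
  rw [closedNbhd_biUnion, card_biUnion hΓ]

theorem card_closedNbhd_biUnion_eq_sdiff_add {Γ S : Finset (Finset V)} (hSΓ : S ⊆ Γ)
    (hΓ : (Γ : Set (Finset V)).PairwiseDisjoint (closedNbhd G)) :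
    (closedNbhd G (Γ.biUnion id)).card =
      (closedNbhd G ((Γ \ S).biUnion id)).card + (closedNbhd G (S.biUnion id)).card := by
  rw [card_closedNbhd_biUnion G hΓ, card_closedNbhd_biUnion G (hΓ.subset (by simp)),
    card_closedNbhd_biUnion G (hΓ.subset (by simpa using hSΓ)), sum_sdiff hSΓ]

theorem mul_card_biUnion_le_add_card_closedNbhd {a c : ℝ} (ha : 0 ≤ a) (hc : 0 ≤ c)
    (Γ : Finset (Finset V)) (hsize : ∀ γ ∈ Γ, (γ.card : ℝ) ≤ 2 * a)
    (hΓ : (Γ : Set (Finset V)).PairwiseDisjoint (closedNbhd G))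
    (hexp : ∀ S ⊆ Γ, a < (S.biUnion id).card → ((S.biUnion id).card : ℝ) ≤ 2 * a →
      c * (S.biUnion id).card ≤ (closedNbhd G (S.biUnion id)).card) :
    c * (Γ.biUnion id).card ≤ c * a + (closedNbhd G (Γ.biUnion id)).card := by
  induction Γ using Finset.strongInduction with
  | H Γ ih =>
  by_cases hsmall : ((Γ.biUnion id).card : ℝ) ≤ a
  · have := mul_le_mul_of_nonneg_left hsmall hc
    have : (0 : ℝ) ≤ (closedNbhd G (Γ.biUnion id)).card := by positivity
    linarith
  obtain ⟨S, hSΓ, hSbig, hSle⟩ :=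
    exists_subset_card_biUnion_mem_Ioc ha Γ hsize (not_le.mp hsmall)
  have hSne : S.Nonempty := by
    rw [nonempty_iff_ne_empty]
    rintro rfl
    rw [biUnion_empty, card_empty, Nat.cast_zero] at hSbig
    linarith
  have hrest := ih (Γ \ S) (sdiff_ssubset hSΓ hSne)
    (fun γ hγ => hsize γ (sdiff_subset hγ)) (hΓ.subset (by simp))
    (fun T hT => hexp T (hT.trans sdiff_subset))
  have hsplit : ((Γ.biUnion id).card : ℝ) ≤
      ((Γ \ S).biUnion id).card + (S.biUnion id).card := by
    exact_mod_cast card_biUnion_le_card_biUnion_sdiff_add Γ S id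
  have hsplitNbhd : ((closedNbhd G (Γ.biUnion id)).card : ℝ) =
      (closedNbhd G ((Γ \ S).biUnion id)).card + (closedNbhd G (S.biUnion id)).card := by
    exact_mod_cast card_closedNbhd_biUnion_eq_sdiff_add G hSΓ hΓ
  nlinarith [hexp S hSΓ hSbig hSle]

end ClosedNbhd

theorem le_twelve_mul_div_of_expansion {Δ n x : ℝ} (hΔ : 3 ≤ Δ) (hn : 0 ≤ n)
    (h : (Δ - 1) / 2 * x ≤ (Δ - 1) / 2 * (n / (6 * Δ)) + 2 * n) :
    x ≤ 12 * n / Δ := by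
  have hΔ0 : 0 < Δ := by linarith
  rw [le_div_iff₀ hΔ0]
  have h' : 6 * Δ * ((Δ - 1) * x) ≤ (Δ - 1) * n + 24 * Δ * n := by
    have := mul_le_mul_of_nonneg_left h (by linarith : (0 : ℝ) ≤ 12 * Δ)
    field_simp at this
    linarith
  nlinarith

theorem stmt_14 {V : Type*} [Fintype V] [DecidableEq V] (G : SimpleGraph V)
    [DecidableRel G.Adj] (n Δ : ℕ) (hΔ : 3 ≤ Δ) (hV : Fintype.card V = 2 * n)
    (Γ : Finset (Finset V))
    (hsize : ∀ γ ∈ Γ, (γ.card : ℝ) ≤ n / (3 * Δ))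
    (hcompat : ∀ γ₁ ∈ Γ, ∀ γ₂ ∈ Γ, γ₁ ≠ γ₂ →
      Disjoint (closedNbhd G γ₁) (closedNbhd G γ₂))
    (hexp : ∀ S ⊆ Γ, (n : ℝ) / (6 * Δ) < ((S.biUnion id).card : ℝ) →
      ((S.biUnion id).card : ℝ) ≤ n / (3 * Δ) →
      ((Δ : ℝ) - 1) / 2 * (S.biUnion id).card ≤ (closedNbhd G (S.biUnion id)).card) :
    ((Γ.biUnion id).card : ℝ) ≤ 12 * n / Δ := by
  have hΔℝ : (3 : ℝ) ≤ Δ := by exact_mod_cast hΔ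
  have htwice : (n : ℝ) / (3 * Δ) = 2 * (n / (6 * Δ)) := by
    field_simp
    ring
  rw [htwice] at hsize hexp
  have hbound := mul_card_biUnion_le_add_card_closedNbhd G (by positivity) (by linarith) Γ hsize
    (fun γ₁ h₁ γ₂ h₂ hne => hcompat γ₁ h₁ γ₂ h₂ hne) hexp
  have hnbhd : ((closedNbhd G (Γ.biUnion id)).card : ℝ) ≤ 2 * n := by
    exact_mod_cast hV ▸ card_le_univ _
  exact le_twelve_mul_div_of_expansion hΔℝ (by positivity) (by linarith)
end

section
/- For every integer Δ ≥ 3, with a = 1/(3Δ), b = (Δ-1)/2, and H(x) = -x·log₂x - (1-x)·log₂(1-x) the binary entropy function, the inequality Δ > (H(a) + H(ab))/(H(a) - ab·H(1/b)) holds. -/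
/-!
Passing to natural logarithms does not change the ratio, so with `x = Δ` it suffices to show
`x (h(a) - ab h(1/b)) - h(a) - h(ab) > 0` for the natural binary entropy `h`. Each entropy is
bounded by its `p log p⁻¹` term plus a polynomial correction, from `log y ≥ 1 - y⁻¹` and
`log y ≤ (y - y⁻¹)/2` (`y ≥ 1`) applied to `y = (1 - p)⁻¹`. The `log x` growth of the
`p log p⁻¹` terms cancels, leaving `((x-1) log (6x/(x-1)) - 2 log ((x-1)/2)) / (6x)`, which
elementary log bounds and `log 6 > 1.79` reduce to a rational function of `x`, positive for `x ≥ 3`.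
-/

/-- The binary entropy function `H(x) = -x log₂ x - (1-x) log₂ (1-x)`. -/
noncomputable def binEnt (x : ℝ) : ℝ :=
  -x * Real.logb 2 x - (1 - x) * Real.logb 2 (1 - x)

open Real

lemma log_le_half_sub_inv {r : ℝ} (hr : 1 ≤ r) : log r ≤ (r - r⁻¹) / 2 := by
  rw [← sinh_log (by positivity)]
  exact self_le_sinh_iff.mpr (log_nonneg hr)

lemma mul_log_inv_add_sub_sq_le_binEntropy {p : ℝ} (hp : p < 1) :
    p * log p⁻¹ + p - p ^ 2 ≤ binEntropy p := by
  have hq : 0 < 1 - p := sub_pos.mpr hp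
  have h : p ≤ log (1 - p)⁻¹ := by
    simpa using one_sub_inv_le_log_of_pos (inv_pos.mpr hq)
  have := mul_le_mul_of_nonneg_left h hq.le
  rw [binEntropy]
  nlinarith

lemma binEntropy_le_mul_log_inv_add_sub_sq_div_two {p : ℝ} (hp₀ : 0 ≤ p) (hp₁ : p ≤ 1) :
    binEntropy p ≤ p * log p⁻¹ + p - p ^ 2 / 2 := by
  suffices (1 - p) * log (1 - p)⁻¹ ≤ p - p ^ 2 / 2 by rw [binEntropy]; linarith
  rcases hp₁.eq_or_lt with rfl | hp₁
  · norm_num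
  have hq : 0 < 1 - p := sub_pos.mpr hp₁
  calc (1 - p) * log (1 - p)⁻¹ ≤ (1 - p) * (((1 - p)⁻¹ - (1 - p)⁻¹⁻¹) / 2) :=
        mul_le_mul_of_nonneg_left (log_le_half_sub_inv (one_le_inv₀ hq |>.mpr (by linarith))) hq.le
    _ = p - p ^ 2 / 2 := by field_simp; ring

lemma binEnt_eq_binEntropy_div_log_two (x : ℝ) : binEnt x = binEntropy x / log 2 := by
  simp only [binEnt, binEntropy, logb, log_inv]
  ring

lemma log_terms_ge {x : ℝ} (hx : 3 ≤ x) :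
    (x - 3) * 1.79 + (x - 1) / x - (x - 1) / 6 + 2 ≤
      (x - 1) * log (6 * x / (x - 1)) - 2 * log ((x - 1) / 2) := by
  have hx₀ : 0 < x := by linarith
  have hx₁ : 0 < x - 1 := by linarith
  have hA : log 6 + (1 - (x - 1) / x) ≤ log (6 * x / (x - 1)) := by
    have := one_sub_inv_le_log_of_pos (div_pos hx₀ hx₁)
    rw [inv_div] at this
    rw [mul_div_assoc, log_mul (by norm_num) (by positivity)]
    linarith
  -- Splitting off `log 6` (not `log 4`) leaves it with coefficient `x - 3 ≥ 0`.
  have hB : log ((x - 1) / 2) ≤ (x - 1) / 12 - 1 + log 6 := by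
    have := log_le_sub_one_of_pos (show 0 < (x - 1) / 12 by positivity)
    rw [show (x - 1) / 2 = (x - 1) / 12 * 6 by ring, log_mul (by positivity) (by norm_num)]
    linarith
  have h6 : 1.79 < log 6 := by
    rw [show (6 : ℝ) = 2 * 3 by norm_num, log_mul two_ne_zero three_ne_zero]
    linarith [log_two_gt_d9, log_three_gt_d9]
  have e : (x - 1) * (1 - (x - 1) / x) = (x - 1) / x := by field_simp; ring
  nlinarith [mul_le_mul_of_nonneg_left hA hx₁.le]

lemma gap_lower_bound_pos {x : ℝ} (hx : 3 ≤ x) :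
    0 < ((x - 3) * 1.79 + (x - 1) / x - (x - 1) / 6 + 2) / (6 * x)
      + (x - 1) * (1 / (3 * x) - (1 / (3 * x)) ^ 2)
      - ((x - 1) / (6 * x) - ((x - 1) / (6 * x)) ^ 2 / 2)
      - x * ((x - 1) / (6 * x)) * (2 / (x - 1) - (2 / (x - 1)) ^ 2 / 2) := by
  have hx₀ : 0 < x := by linarith
  have hx₁ : 0 < x - 1 := by linarith
  field_simp
  ring_nf
  have hx₃ : 0 ≤ x - 3 := by linarith
  nlinarith [mul_nonneg hx₃ (sq_nonneg x), mul_nonneg (mul_nonneg hx₃ hx₃) (sq_nonneg x)]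

lemma entropy_gap_pos {x : ℝ} (hx : 3 ≤ x) :
    binEntropy (1 / (3 * x)) + binEntropy ((x - 1) / (6 * x)) <
      x * (binEntropy (1 / (3 * x)) - (x - 1) / (6 * x) * binEntropy (2 / (x - 1))) := by
  have hx₀ : 0 < x := by linarith
  have hx₁ : 0 < x - 1 := by linarith
  set a := 1 / (3 * x) with ha
  set c := (x - 1) / (6 * x) with hc
  set p := 2 / (x - 1) with hp
  have hA := mul_log_inv_add_sub_sq_le_binEntropy (show a < 1 by
    rw [ha, div_lt_one (by positivity)]; linarith)
  have hC := binEntropy_le_mul_log_inv_add_sub_sq_div_two (show 0 ≤ c by positivity)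
    (by rw [hc, div_le_one (by positivity)]; linarith)
  have hP := binEntropy_le_mul_log_inv_add_sub_sq_div_two (show 0 ≤ p by positivity)
    (by rw [hp, div_le_one hx₁]; linarith)
  have hc_inv : c⁻¹ = 6 * x / (x - 1) := inv_div _ _
  have hp_inv : p⁻¹ = (x - 1) / 2 := inv_div _ _
  have hlog : log a⁻¹ = log c⁻¹ + log p⁻¹ := by
    rw [← log_mul (by positivity) (by positivity), hc_inv, hp_inv, ha, one_div, inv_inv]
    congr 1
    field_simp
    norm_num
  -- Since `a⁻¹ = c⁻¹ p⁻¹`, the `log x` growth of the `p log p⁻¹` terms cancels.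
  have hgap : ((x - 1) * log c⁻¹ - 2 * log p⁻¹) / (6 * x) + ((x - 1) * (a - a ^ 2)
      - (c - c ^ 2 / 2) - x * c * (p - p ^ 2 / 2)) ≤
      x * (binEntropy a - c * binEntropy p) - (binEntropy a + binEntropy c) := by
    have e : ((x - 1) * log c⁻¹ - 2 * log p⁻¹) / (6 * x) + ((x - 1) * (a - a ^ 2)
        - (c - c ^ 2 / 2) - x * c * (p - p ^ 2 / 2)) = (x - 1) * (a * log a⁻¹ + a - a ^ 2)
        - (c * log c⁻¹ + c - c ^ 2 / 2) - x * c * (p * log p⁻¹ + p - p ^ 2 / 2) := by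
      rw [hlog, ha, hc, hp]
      field_simp
      ring
    rw [e]
    nlinarith [mul_le_mul_of_nonneg_left hA hx₁.le,
      mul_le_mul_of_nonneg_left hP (show 0 ≤ x * c by positivity)]
  have hlower := div_le_div_of_nonneg_right (log_terms_ge hx) (show 0 ≤ 6 * x by positivity)
  rw [hc_inv, hp_inv] at hgap
  linarith [gap_lower_bound_pos hx]

theorem stmt_15 (Δ : ℕ) (hΔ : 3 ≤ Δ) (a b : ℝ)
    (ha : a = 1 / (3 * Δ)) (hb : b = ((Δ : ℝ) - 1) / 2) :
    (binEnt a + binEnt (a * b)) / (binEnt a - a * b * binEnt (1 / b)) < Δ := by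
  have hx : (3 : ℝ) ≤ Δ := by exact_mod_cast hΔ
  have hab : a * b = (Δ - 1) / (6 * Δ) := by
    rw [ha, hb]; field_simp; ring
  have hb_inv : 1 / b = 2 / (Δ - 1) := by rw [hb, one_div_div]
  have hgap := entropy_gap_pos hx
  have hnum : 0 < binEntropy (1 / (3 * Δ)) + binEntropy ((Δ - 1) / (6 * Δ)) := by
    refine add_pos (binEntropy_pos (by positivity) ?_)
      (binEntropy_pos (div_pos (by linarith) (by positivity)) ?_)
    · rw [div_lt_one (by positivity)]; linarith
    · rw [div_lt_one (by positivity)]; linarith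
  have hden : 0 < binEntropy (1 / (3 * Δ)) - (Δ - 1) / (6 * Δ) * binEntropy (2 / (Δ - 1)) :=
    pos_of_mul_pos_right (hnum.trans hgap) (by positivity)
  rw [hab, hb_inv, ha]
  simp only [binEnt_eq_binEntropy_div_log_two]
  rw [← add_div, ← mul_div_assoc, ← sub_div, div_div_div_cancel_right₀ (log_pos one_lt_two).ne',
    div_lt_iff₀ hden]
  linarith
end
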